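/- arXiv:2604.11215 — 5 statements merged into one kernel-verified Lean document; each statement's English description precedes it below -/
import Mathlib

section
/- If λ is a left eigenvalue of the companion matrix C_{f_l} of the monic left quaternionic polynomial f_l(z) = zⁿ + q_n z^{n−1} + ⋯ + q₂ z + q₁, then f_l(λ) = 0. -/
/-!
The first `n - 1` rows of `C x = λ x` say `x (k + 1) = λ x k`, so `x k = λ ^ k x 0` and `x 0 ≠ 0`.
Substituting into the last row, whose entries are the coefficients, gives `f_l(λ) x 0 = 0`,
and `ℍ` has no zero divisors.
-/

open scoped Quaternion
open Finset Matrix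

noncomputable def specNorm {n : ℕ} (A : Matrix (Fin n) (Fin n) ℍ[ℝ]) : ℝ :=
  sSup {r : ℝ | ∃ x : Fin n → ℍ[ℝ], x ≠ 0 ∧
    r = Real.sqrt (∑ i, ‖A.mulVec x i‖ ^ 2) / Real.sqrt (∑ i, ‖x i‖ ^ 2)}

section

variable {R : Type*} [Ring R]

/-- The paper's `f_l(λ)`. -/
def leftEval (n : ℕ) (q : ℕ → R) (lam : R) : R :=
  lam ^ n + ∑ i ∈ Icc 1 n, q i * lam ^ (i - 1)

theorem Finset.sum_Icc_one_eq_sum_fin {M : Type*} [AddCommMonoid M] (n : ℕ) (f : ℕ → M) :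
    ∑ i ∈ Icc 1 n, f i = ∑ j : Fin n, f ((j : ℕ) + 1) := by
  rw [Fin.sum_univ_eq_sum_range (fun j => f (j + 1)), range_eq_Ico, sum_Ico_add',
    Ico_add_one_right_eq_Icc, zero_add]

theorem leftEval_eq_sum_fin (n : ℕ) (q : ℕ → R) (lam : R) :
    leftEval n q lam = lam ^ n + ∑ j : Fin n, q ((j : ℕ) + 1) * lam ^ (j : ℕ) := by
  simp [leftEval, Finset.sum_Icc_one_eq_sum_fin]

namespace Matrix

/-- The paper's `C_{f_l}`. -/
def leftCompanion (n : ℕ) (q : ℕ → R) : Matrix (Fin n) (Fin n) R := fun i j =>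
  if (i : ℕ) = n - 1 then -q ((j : ℕ) + 1) else if (j : ℕ) = (i : ℕ) + 1 then 1 else 0

variable {m : ℕ} (q : ℕ → R) (x : Fin (m + 1) → R)

theorem leftCompanion_mulVec_castSucc (i : Fin m) :
    (leftCompanion (m + 1) q *ᵥ x) i.castSucc = x i.succ := by
  have hrow : leftCompanion (m + 1) q i.castSucc = Pi.single i.succ 1 := by
    ext j
    simp [leftCompanion, Pi.single_apply, Fin.ext_iff, i.isLt.ne]
  rw [mulVec, hrow, single_one_dotProduct]

theorem leftCompanion_mulVec_last :
    (leftCompanion (m + 1) q *ᵥ x) (Fin.last m) = -∑ j : Fin (m + 1), q ((j : ℕ) + 1) * x j := by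
  simp [mulVec, dotProduct, leftCompanion]

variable {q x} {lam : R}

theorem apply_eq_pow_mul_of_leftCompanion_mulVec_eq
    (h : leftCompanion (m + 1) q *ᵥ x = fun i => lam * x i) (i : Fin (m + 1)) :
    x i = lam ^ (i : ℕ) * x 0 := by
  induction i using Fin.induction with
  | zero => simp
  | succ i ih =>
    rw [← leftCompanion_mulVec_castSucc q x, h]
    simp only [ih, Fin.val_castSucc, Fin.val_succ, pow_succ', mul_assoc]

theorem leftEval_mul_eq_zero_of_leftCompanion_mulVec_eq
    (h : leftCompanion (m + 1) q *ᵥ x = fun i => lam * x i) :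
    leftEval (m + 1) q lam * x 0 = 0 := by
  have hpow := apply_eq_pow_mul_of_leftCompanion_mulVec_eq h
  have hlast : -∑ j : Fin (m + 1), q ((j : ℕ) + 1) * x j = lam * x (Fin.last m) := by
    rw [← leftCompanion_mulVec_last, h]
  calc leftEval (m + 1) q lam * x 0
      = (lam ^ (m + 1) + ∑ j : Fin (m + 1), q ((j : ℕ) + 1) * lam ^ (j : ℕ)) * x 0 := by
        rw [leftEval_eq_sum_fin]
    _ = lam * x (Fin.last m) + ∑ j : Fin (m + 1), q ((j : ℕ) + 1) * x j := by
        simp only [add_mul, sum_mul, pow_succ', mul_assoc, hpow (Fin.last m), Fin.val_last,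
          ← hpow]
    _ = 0 := by rw [← hlast, neg_add_cancel]

end Matrix

end

theorem leftEig_companion_is_zero_general (n : ℕ) (q : ℕ → ℍ[ℝ])
    (C : Matrix (Fin n) (Fin n) ℍ[ℝ])
    (hC : ∀ i j : Fin n, C i j =
      if (i : ℕ) = n - 1 then -q ((j : ℕ) + 1)
      else if (j : ℕ) = (i : ℕ) + 1 then 1 else 0)
    (lam : ℍ[ℝ]) (x : Fin n → ℍ[ℝ]) (hx : x ≠ 0)
    (h : C.mulVec x = fun i => lam * x i) :
    lam ^ n + ∑ i ∈ Finset.Icc 1 n, q i * lam ^ (i - 1) = 0 := by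
  obtain ⟨m, rfl⟩ : ∃ m, n = m + 1 := by
    cases n with
    | zero => exact absurd (Subsingleton.elim x 0) hx
    | succ m => exact ⟨m, rfl⟩
  obtain rfl : C = leftCompanion (m + 1) q := Matrix.ext hC
  have hx0 : x 0 ≠ 0 := fun hx0 => hx <| funext fun i => by
    rw [apply_eq_pow_mul_of_leftCompanion_mulVec_eq h, hx0, mul_zero, Pi.zero_apply]
  exact (mul_eq_zero.mp (leftEval_mul_eq_zero_of_leftCompanion_mulVec_eq h)).resolve_right hx0

theorem leftEig_companion_is_zero (n : ℕ) (hn : 1 ≤ n) (q : ℕ → ℍ[ℝ])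
    (C : Matrix (Fin n) (Fin n) ℍ[ℝ])
    (hC : ∀ i j : Fin n, C i j =
      if (i : ℕ) = n - 1 then -q ((j : ℕ) + 1)
      else if (j : ℕ) = (i : ℕ) + 1 then 1 else 0)
    (lam : ℍ[ℝ]) (x : Fin n → ℍ[ℝ]) (hx : x ≠ 0)
    (h : C.mulVec x = fun i => lam * x i) :
    lam ^ n + ∑ i ∈ Finset.Icc 1 n, q i * lam ^ (i - 1) = 0 :=
  leftEig_companion_is_zero_general n q C hC lam x hx h
end

section
/- Every zero z of the monic right quaternionic polynomial f_r(z) = zⁿ + z^{n−1} q_n + ⋯ + z q₂ + q₁ satisfies |z| ≤ 1 + max_{1≤i≤n} |q_i| (Cauchy bound for quaternionic polynomials). -/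
/-!
If `‖z‖ > 1`, taking norms in `zⁿ = -∑ zⁱ⁻¹ qᵢ` gives `‖z‖ⁿ ≤ M (1 + ‖z‖ + ⋯ + ‖z‖ⁿ⁻¹)`
with `M = maxᵢ ‖qᵢ‖`. Multiplying by `‖z‖ - 1` and summing the geometric series yields
`‖z‖ⁿ (‖z‖ - 1) ≤ M (‖z‖ⁿ - 1) ≤ M ‖z‖ⁿ`, hence `‖z‖ - 1 ≤ M`. Only multiplicativity of the
norm is used, so the argument works verbatim over the quaternions.
-/

open scoped Quaternion
open Finset Matrix

theorem le_one_add_of_pow_le_mul_geom_sum {r M : ℝ} {n : ℕ} (hM : 0 ≤ M)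
    (h : r ^ n ≤ M * ∑ j ∈ range n, r ^ j) : r ≤ 1 + M := by
  rcases le_or_gt r 1 with hr | hr
  · linarith
  have hpos : 0 < r ^ n := by positivity
  have hgeom : (∑ j ∈ range n, r ^ j) * (r - 1) = r ^ n - 1 := geom_sum_mul r n
  have : r ^ n * (r - 1) ≤ r ^ n * M :=
    calc r ^ n * (r - 1) ≤ M * (∑ j ∈ range n, r ^ j) * (r - 1) :=
          mul_le_mul_of_nonneg_right h (by linarith)
      _ = M * (r ^ n - 1) := by rw [mul_assoc, hgeom]
      _ ≤ r ^ n * M := by nlinarith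
  linarith [le_of_mul_le_mul_left this hpos]

theorem norm_pow_le_mul_geom_sum_of_root {𝕜 : Type*} [NormedDivisionRing 𝕜] {n : ℕ}
    {a : ℕ → 𝕜} {M : ℝ} (ha : ∀ i ∈ range n, ‖a i‖ ≤ M) {z : 𝕜}
    (hz : z ^ n + ∑ i ∈ range n, z ^ i * a i = 0) :
    ‖z‖ ^ n ≤ M * ∑ i ∈ range n, ‖z‖ ^ i :=
  calc ‖z‖ ^ n = ‖∑ i ∈ range n, z ^ i * a i‖ := by
        rw [← norm_pow, eq_neg_of_add_eq_zero_left hz, norm_neg]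
    _ ≤ ∑ i ∈ range n, ‖z ^ i * a i‖ := norm_sum_le _ _
    _ ≤ ∑ i ∈ range n, ‖z‖ ^ i * M := sum_le_sum fun i hi => by
        rw [norm_mul, norm_pow]
        exact mul_le_mul_of_nonneg_left (ha i hi) (by positivity)
    _ = M * ∑ i ∈ range n, ‖z‖ ^ i := by rw [← sum_mul, mul_comm]

theorem norm_le_one_add_of_monic_root {𝕜 : Type*} [NormedDivisionRing 𝕜] {n : ℕ}
    {a : ℕ → 𝕜} {M : ℝ} (hM : 0 ≤ M) (ha : ∀ i ∈ range n, ‖a i‖ ≤ M) {z : 𝕜}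
    (hz : z ^ n + ∑ i ∈ range n, z ^ i * a i = 0) : ‖z‖ ≤ 1 + M :=
  le_one_add_of_pow_le_mul_geom_sum hM (norm_pow_le_mul_geom_sum_of_root ha hz)

theorem sum_Icc_one_eq_sum_range {β : Type*} [AddCommMonoid β] (f : ℕ → β) (n : ℕ) :
    ∑ i ∈ Icc 1 n, f i = ∑ i ∈ range n, f (i + 1) := by
  rw [← Ico_add_one_right_eq_Icc, sum_Ico_eq_sum_range, add_tsub_cancel_right]
  simp only [add_comm]

theorem cauchy_bound (n : ℕ) (hn : 1 ≤ n) (q : ℕ → ℍ[ℝ]) (z : ℍ[ℝ])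
    (hz : z ^ n + ∑ i ∈ Finset.Icc 1 n, z ^ (i - 1) * q i = 0) :
    ‖z‖ ≤ 1 + (Finset.Icc 1 n).sup' (Finset.nonempty_Icc.mpr hn) (fun i => ‖q i‖) := by
  set M := (Icc 1 n).sup' (nonempty_Icc.mpr hn) (fun i => ‖q i‖)
  have hqM : ∀ i ∈ Icc 1 n, ‖q i‖ ≤ M := fun i hi => le_sup' (fun i => ‖q i‖) hi
  have hM : 0 ≤ M := (norm_nonneg _).trans (hqM 1 (mem_Icc.mpr ⟨le_rfl, hn⟩))
  simp only [sum_Icc_one_eq_sum_range, add_tsub_cancel_right] at hz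
  refine norm_le_one_add_of_monic_root hM (fun i hi => hqM (i + 1) ?_) hz
  simp only [mem_Icc, mem_range] at hi ⊢
  omega
end

section
/- Let f and g be right quaternionic polynomials and z₀ ∈ ℍ. Then (f*g)(z₀) = 0 if and only if f(z₀) = 0, or f(z₀) ≠ 0 and g(f(z₀)^{−1} z₀ f(z₀)) = 0. -/
open scoped Quaternion
open Finset Matrix

/-! Evaluating `f * g` at `z₀` gives `∑ⱼ z₀ʲ f(z₀) bⱼ`, because the powers of `z₀` commute
with each other. When `c = f(z₀) ≠ 0`, writing `z₀ʲ c = c (c⁻¹ z₀ c)ʲ` pulls `c` out to the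
left, so `(f * g)(z₀) = c · g(c⁻¹ z₀ c)`, and `ℍ` has no zero divisors. -/

theorem sum_sum_pow_add_mul_mul {R : Type*} [Semiring R] (s t : Finset ℕ) (z : R)
    (a b : ℕ → R) :
    ∑ i ∈ s, ∑ j ∈ t, z ^ (i + j) * (a i * b j) =
      ∑ j ∈ t, z ^ j * (∑ i ∈ s, z ^ i * a i) * b j := by
  rw [Finset.sum_comm]
  refine Finset.sum_congr rfl fun j _ => ?_
  rw [Finset.mul_sum, Finset.sum_mul]
  refine Finset.sum_congr rfl fun i _ => ?_
  rw [add_comm, pow_add, ← mul_assoc, ← mul_assoc]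

theorem sum_pow_mul_mul_eq_mul_sum_conj_pow {D : Type*} [DivisionRing D] (t : Finset ℕ)
    {c : D} (hc : c ≠ 0) (z : D) (b : ℕ → D) :
    ∑ j ∈ t, z ^ j * c * b j = c * ∑ j ∈ t, (c⁻¹ * z * c) ^ j * b j := by
  rw [Finset.mul_sum]
  refine Finset.sum_congr rfl fun j _ => ?_
  rw [GroupWithZero.conj_pow₀ hc, mul_assoc c⁻¹, mul_assoc c⁻¹, mul_inv_cancel_left₀ hc, mul_assoc]

theorem zeros_of_convolution (m k : ℕ) (a b : ℕ → ℍ[ℝ]) (z₀ : ℍ[ℝ]) :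
    (∑ i ∈ Finset.range (m + 1), ∑ j ∈ Finset.range (k + 1),
        z₀ ^ (i + j) * (a i * b j)) = 0 ↔
      (∑ i ∈ Finset.range (m + 1), z₀ ^ i * a i) = 0 ∨
      ((∑ i ∈ Finset.range (m + 1), z₀ ^ i * a i) ≠ 0 ∧
        (∑ j ∈ Finset.range (k + 1),
          ((∑ i ∈ Finset.range (m + 1), z₀ ^ i * a i)⁻¹ * z₀ *
            (∑ i ∈ Finset.range (m + 1), z₀ ^ i * a i)) ^ j * b j) = 0) := by
  rw [sum_sum_pow_add_mul_mul]
  set c := ∑ i ∈ Finset.range (m + 1), z₀ ^ i * a i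
  by_cases hc : c = 0
  · simp [hc]
  · rw [sum_pow_mul_mul_eq_mul_sum_conj_pow _ hc, mul_eq_zero]
    simp [hc]
end

section
/- Every zero of the monic right quaternionic polynomial f_r(z) = zⁿ + z^{n−1} q_n + ⋯ + z q₂ + q₁ is a left eigenvalue of its companion matrix C_{f_r}, and hence satisfies |z| ≤ ‖C_{f_r}‖₂. -/
open scoped Quaternion
open Finset Matrix

/-!
The Horner tails of `f_r` form a left eigenvector of `C_{f_r}` for the eigenvalue `z`: put
`x_{n-1} = 1` and `x_{i-1} = q_{i+1} + z x_i`. The subdiagonal rows of `C x = z x` are then this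
recursion, and the first row reads `q₁ + z x₀ = f_r(z) = 0`. Since `|z x_i| = |z| |x_i|` in `ℍ`,
the ratio `‖C x‖ / ‖x‖` equals `|z|`, and it is bounded by the Frobenius norm of `C`.
-/

section MonicRightEval

variable {R : Type*} [Semiring R]

/-- `f_r(z)` is `monicRightEval z (fun i => q (i + 1)) n`. -/
def monicRightEval (z : R) (c : ℕ → R) (k : ℕ) : R :=
  z ^ k + ∑ i ∈ range k, z ^ i * c i

@[simp]
lemma monicRightEval_zero (z : R) (c : ℕ → R) : monicRightEval z c 0 = 1 := by
  simp [monicRightEval]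

lemma monicRightEval_succ (z : R) (c : ℕ → R) (k : ℕ) :
    monicRightEval z c (k + 1) = c 0 + z * monicRightEval z (fun i => c (i + 1)) k := by
  simp only [monicRightEval, sum_range_succ', mul_add, mul_sum, ← mul_assoc, ← pow_succ',
    pow_zero, one_mul]
  abel

end MonicRightEval

section Companion

variable {R : Type*} [Ring R]

def companion (q : ℕ → R) (m : ℕ) : Matrix (Fin (m + 1)) (Fin (m + 1)) R :=
  of fun i j => if (j : ℕ) = m then -q (i + 1) else if (i : ℕ) = j + 1 then 1 else 0

lemma companion_mulVec_zero (q : ℕ → R) {m : ℕ} (x : Fin (m + 1) → R) :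
    (companion q m *ᵥ x) 0 = -q 1 * x (Fin.last m) := by
  have hm (j : Fin m) : (j : ℕ) ≠ m := j.isLt.ne
  simp [companion, mulVec, dotProduct, Fin.sum_univ_castSucc, hm]

lemma companion_mulVec_succ (q : ℕ → R) {m : ℕ} (x : Fin (m + 1) → R) (i : Fin m) :
    (companion q m *ᵥ x) i.succ = -q (i + 2) * x (Fin.last m) + x i.castSucc := by
  have hm (j : Fin m) : (j : ℕ) ≠ m := j.isLt.ne
  simp [companion, mulVec, dotProduct, Fin.sum_univ_castSucc, hm, Fin.val_inj, add_assoc]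
  abel

end Companion

section Eigenvector

variable {R : Type*} [Ring R]

def companionEigenvector (z : R) (q : ℕ → R) (m : ℕ) (i : Fin (m + 1)) : R :=
  monicRightEval z (fun j => q (i + 2 + j)) (m - i)

variable (z : R) (q : ℕ → R) {m : ℕ}

@[simp]
lemma companionEigenvector_last : companionEigenvector z q m (Fin.last m) = 1 := by
  simp [companionEigenvector]

lemma companionEigenvector_castSucc (i : Fin m) :
    companionEigenvector z q m i.castSucc = q (i + 2) + z * companionEigenvector z q m i.succ := by
  have hi : m - i = m - (i + 1) + 1 := by omega
  simp only [companionEigenvector, Fin.val_castSucc, Fin.val_succ, hi, monicRightEval_succ,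
    add_zero, add_assoc, add_comm 1]

lemma add_mul_companionEigenvector_zero :
    q 1 + z * companionEigenvector z q m 0 = monicRightEval z (fun j => q (j + 1)) (m + 1) := by
  simp [companionEigenvector, monicRightEval_succ, add_comm _ 2]

lemma companion_mulVec_companionEigenvector
    (hz : monicRightEval z (fun j => q (j + 1)) (m + 1) = 0) :
    companion q m *ᵥ companionEigenvector z q m = fun i => z * companionEigenvector z q m i := by
  funext i
  induction i using Fin.cases with
  | zero =>
    rw [companion_mulVec_zero, companionEigenvector_last, mul_one, neg_eq_iff_add_eq_zero,
      add_mul_companionEigenvector_zero, hz]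
  | succ i =>
    rw [companion_mulVec_succ, companionEigenvector_last, mul_one,
      companionEigenvector_castSucc, neg_add_cancel_left]

end Eigenvector

lemma sum_norm_mulVec_sq_le {R : Type*} [NonUnitalSeminormedRing R] {l n : Type*} [Fintype l]
    [Fintype n] (A : Matrix l n R) (x : n → R) :
    ∑ i, ‖(A *ᵥ x) i‖ ^ 2 ≤ (∑ i, ∑ j, ‖A i j‖ ^ 2) * ∑ j, ‖x j‖ ^ 2 := by
  rw [sum_mul]
  refine sum_le_sum fun i _ => ?_
  calc ‖(A *ᵥ x) i‖ ^ 2 ≤ (∑ j, ‖A i j‖ * ‖x j‖) ^ 2 := by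
        gcongr
        exact (norm_sum_le _ _).trans (sum_le_sum fun j _ => norm_mul_le _ _)
    _ ≤ (∑ j, ‖A i j‖ ^ 2) * ∑ j, ‖x j‖ ^ 2 := sum_mul_sq_le_sq_mul_sq _ _ _

lemma le_specNorm {n : ℕ} (A : Matrix (Fin n) (Fin n) ℍ[ℝ]) {x : Fin n → ℍ[ℝ]} (hx : x ≠ 0) :
    √(∑ i, ‖(A *ᵥ x) i‖ ^ 2) / √(∑ i, ‖x i‖ ^ 2) ≤ specNorm A := by
  refine le_csSup ⟨√(∑ i, ∑ j, ‖A i j‖ ^ 2), ?_⟩ ⟨x, hx, rfl⟩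
  rintro r ⟨y, -, rfl⟩
  refine div_le_of_le_mul₀ (Real.sqrt_nonneg _) (Real.sqrt_nonneg _) ?_
  rw [← Real.sqrt_mul (sum_nonneg fun i _ => sum_nonneg fun j _ => sq_nonneg _)]
  exact Real.sqrt_le_sqrt (sum_norm_mulVec_sq_le A y)

lemma norm_le_specNorm_of_mulVec_eq {n : ℕ} {A : Matrix (Fin n) (Fin n) ℍ[ℝ]} {x : Fin n → ℍ[ℝ]}
    {z : ℍ[ℝ]} (hx : x ≠ 0) (hAx : A *ᵥ x = fun i => z * x i) : ‖z‖ ≤ specNorm A := by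
  have hpos : 0 < √(∑ i, ‖x i‖ ^ 2) := by
    obtain ⟨i, hi⟩ := Function.ne_iff.mp hx
    exact Real.sqrt_pos.mpr <|
      sum_pos' (fun j _ => sq_nonneg _) ⟨i, mem_univ _, pow_pos (norm_pos_iff.mpr hi) 2⟩
  have hratio : √(∑ i, ‖(A *ᵥ x) i‖ ^ 2) = ‖z‖ * √(∑ i, ‖x i‖ ^ 2) := by
    simp only [hAx, norm_mul, mul_pow, ← mul_sum]
    rw [Real.sqrt_mul (sq_nonneg _), Real.sqrt_sq (norm_nonneg _)]
  simpa [hratio, hpos.ne'] using le_specNorm A hx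

theorem zero_is_leftEig_companion (n : ℕ) (hn : 1 ≤ n) (q : ℕ → ℍ[ℝ])
    (C : Matrix (Fin n) (Fin n) ℍ[ℝ])
    (hC : ∀ i j : Fin n, C i j =
      if (j : ℕ) = n - 1 then -q ((i : ℕ) + 1)
      else if (i : ℕ) = (j : ℕ) + 1 then 1 else 0)
    (z : ℍ[ℝ]) (hz : z ^ n + ∑ i ∈ Finset.Icc 1 n, z ^ (i - 1) * q i = 0) :
    (∃ x : Fin n → ℍ[ℝ], x ≠ 0 ∧ C.mulVec x = fun i => z * x i) ∧
      ‖z‖ ≤ specNorm C := by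
  obtain ⟨m, rfl⟩ := Nat.exists_eq_add_of_le' hn
  have hC : C = companion q m := Matrix.ext fun i j => by simp [hC, companion]
  have hz : monicRightEval z (fun j => q (j + 1)) (m + 1) = 0 := by
    rw [← Ico_add_one_right_eq_Icc, sum_Ico_eq_sum_range, add_tsub_cancel_right] at hz
    simpa [monicRightEval, add_comm 1] using hz
  have hv : companionEigenvector z q m ≠ 0 := fun h => by
    simpa using congrFun h (Fin.last m)
  have hCv := companion_mulVec_companionEigenvector z q hz
  subst hC
  exact ⟨⟨_, hv, hCv⟩, norm_le_specNorm_of_mulVec_eq hv hCv⟩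
end

section
/- For the (n+1)×(n+1) companion matrix C of f_{r₁}(z) = z^{n+1} − z^{n−1} v_n − ⋯ − z v₂ − v₁ (with 1's on the subdiagonal, last column (v₁, v₂, …, v_n, 0)ᵀ), the square C² decomposes as M + N + L where M has last column (0, v₁, …, v_n)ᵀ, N has second-to-last column (v₁,…,v_n, 0)ᵀ, L = [[0,0],[I_{n−1},0]] in block form, and these satisfy M N^H = N M^H = M L^H = L M^H = N L^H = L N^H = 0. -/
open scoped Quaternion
open Finset Matrix

theorem companion_sq_decomposition (n : ℕ) (hn : 2 ≤ n) (v : ℕ → ℍ[ℝ])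
    (C M N L : Matrix (Fin (n + 1)) (Fin (n + 1)) ℍ[ℝ])
    (hC : ∀ i j : Fin (n + 1), C i j =
      if (j : ℕ) = n then (if (i : ℕ) < n then v ((i : ℕ) + 1) else 0)
      else if (i : ℕ) = (j : ℕ) + 1 then 1 else 0)
    (hM : ∀ i j : Fin (n + 1), M i j =
      if (j : ℕ) = n ∧ 1 ≤ (i : ℕ) then v (i : ℕ) else 0)
    (hN : ∀ i j : Fin (n + 1), N i j =
      if (j : ℕ) = n - 1 ∧ (i : ℕ) < n then v ((i : ℕ) + 1) else 0)
    (hL : ∀ i j : Fin (n + 1), L i j = if (i : ℕ) = (j : ℕ) + 2 then 1 else 0) :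
    C ^ 2 = M + N + L ∧
      M * Nᴴ = 0 ∧ N * Mᴴ = 0 ∧ M * Lᴴ = 0 ∧ L * Mᴴ = 0 ∧
      N * Lᴴ = 0 ∧ L * Nᴴ = 0 := by
  refine ⟨?_, ?_, ?_, ?_, ?_, ?_, ?_⟩
  · rw [sq]
    refine Matrix.ext fun i j => ?_
    rw [Matrix.mul_apply]
    have hsplit : ∀ k : Fin (n + 1), C i k * C k j =
        (if k = Fin.last n then (if (i : ℕ) < n then v ((i : ℕ) + 1) else 0) * C k j else 0)
        + (if (i : ℕ) = (k : ℕ) + 1 then C k j else 0) := by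
      intro k
      rw [hC i k]
      rcases eq_or_ne (k : ℕ) n with h | h
      · have hk : k = Fin.last n := Fin.ext h
        have hi : ¬ ((i : ℕ) = (k : ℕ) + 1) := by have := i.isLt; omega
        rw [if_pos h, if_pos hk, if_neg hi, add_zero]
      · have hk : k ≠ Fin.last n := by simpa [Fin.ext_iff] using h
        rw [if_neg h, if_neg hk, zero_add]
        split_ifs <;> simp
    rw [Finset.sum_congr rfl (fun k _ => hsplit k), Finset.sum_add_distrib]
    rw [Finset.sum_ite_eq' Finset.univ (Fin.last n)]
    simp only [Finset.mem_univ, if_true]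
    have hClast : C (Fin.last n) j = if (j : ℕ) = n - 1 then 1 else 0 := by
      rw [hC]
      have := j.isLt
      simp only [Fin.val_last]
      split_ifs <;> first | rfl | omega
    rcases Nat.eq_zero_or_pos (i : ℕ) with hi0 | hi1
    · have hz : ∀ k : Fin (n + 1), (if (i : ℕ) = (k : ℕ) + 1 then C k j else 0) = 0 := by
        intro k; rw [if_neg]; omega
      rw [Finset.sum_congr rfl (fun k _ => hz k), Finset.sum_const_zero]
      rw [hClast]
      simp only [Matrix.add_apply, hM, hN, hL]
      have := i.isLt; have := j.isLt
      split_ifs <;> first | (exfalso; omega) | simp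
    · set k0 : Fin (n + 1) := ⟨(i : ℕ) - 1, by have := i.isLt; omega⟩ with hk0
      have hcond : ∀ k : Fin (n + 1), ((i : ℕ) = (k : ℕ) + 1) ↔ k = k0 := by
        intro k; rw [Fin.ext_iff]; simp only [hk0]; omega
      have hre : ∀ k : Fin (n + 1), (if (i : ℕ) = (k : ℕ) + 1 then C k j else 0)
          = (if k = k0 then C k j else 0) := by
        intro k; simp only [hcond k]
      rw [Finset.sum_congr rfl (fun k _ => hre k), Finset.sum_ite_eq' Finset.univ k0]
      simp only [Finset.mem_univ, if_true]
      have hCk0 : C k0 j = if (j : ℕ) = n then v (i : ℕ)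
          else if (i : ℕ) = (j : ℕ) + 2 then 1 else 0 := by
        rw [hC]
        have hlt : ((k0 : ℕ)) < n := by have := i.isLt; simp only [hk0]; omega
        have harith : (k0 : ℕ) + 1 = (i : ℕ) := by simp only [hk0]; omega
        rw [if_pos hlt, harith]
        split_ifs <;> first | rfl | omega
      rw [hClast, hCk0]
      simp only [Matrix.add_apply, hM, hN, hL]
      have := i.isLt; have := j.isLt
      split_ifs <;> first | (exfalso; omega) | simp
  all_goals
    refine Matrix.ext fun i j => ?_
    rw [Matrix.mul_apply, Matrix.zero_apply]
    refine Finset.sum_eq_zero fun k _ => ?_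
    simp only [Matrix.conjTranspose_apply, hM, hN, hL]
    have := i.isLt; have := j.isLt; have := k.isLt
    split_ifs <;> first | (exfalso; omega) | simp
end
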